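/- arXiv:2603.24771 — 3 statements merged into one kernel-verified Lean document; each statement's English description precedes it below -/
import Mathlib

section
/- For i.i.d. positive random variables w_1, ..., w_K with finite mean μ = E[w], the sequence of importance-weighted bounds L_K = E[log((1/K)∑_{k=1}^K w_k)] is monotonically non-decreasing in K, i.e., L_{K+1} ≥ L_K for all K ≥ 1. -/
open MeasureTheory ProbabilityTheory Filter Set
open scoped ENNReal BigOperators Topology

/-!
Among `K + 1` i.i.d. weights, each of the `K + 1` leave-one-out averages has the law of the
`K`-sample average, and these averages themselves average to the `(K + 1)`-sample average.
Concavity of `log` (Jensen, pointwise in `ω`) then gives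
`(K + 1)⁻¹ ∑ⱼ log(leave-one-out average j) ≤ log((K + 1)-sample average)`,
and taking expectations turns the left side into `L K` and the right side into `L (K + 1)`.
-/

open Finset

lemma ProbabilityTheory.iIndepFun.identDistrib_sum_of_card_eq {Ω ι E : Type*}
    [MeasurableSpace Ω] {μ : Measure Ω} [AddCommMonoid E] [MeasurableSpace E]
    [MeasurableAdd₂ E] {X : ι → Ω → E} (hindep : iIndepFun X μ)
    (hident : ∀ i j, IdentDistrib (X i) (X j) μ μ) {s t : Finset ι} (hst : #s = #t) :
    IdentDistrib (fun ω ↦ ∑ i ∈ s, X i ω) (fun ω ↦ ∑ i ∈ t, X i ω) μ μ := by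
  let e : s ≃ t := Fintype.equivOfCardEq (by simpa using hst)
  have hvec : IdentDistrib (fun ω (i : s) ↦ X i ω) (fun ω (i : s) ↦ X (e i) ω) μ μ :=
    IdentDistrib.pi (fun i ↦ hident i (e i)) (hindep.precomp Subtype.val_injective)
      (hindep.precomp (Subtype.val_injective.comp e.injective))
  have hsum : Measurable fun v : s → E ↦ ∑ i, v i :=
    Finset.measurable_sum _ fun i _ ↦ measurable_pi_apply i
  convert hvec.comp hsum using 2 with ω ω
  · exact (Finset.sum_coe_sort s fun i ↦ X i ω).symm
  · simp only [Function.comp_apply]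
    rw [e.sum_comp (fun i : t ↦ X i ω), Finset.sum_coe_sort t fun i ↦ X i ω]

lemma Finset.sum_sum_erase {ι R : Type*} [CommRing R] [DecidableEq ι] (t : Finset ι)
    (x : ι → R) : ∑ j ∈ t, ∑ k ∈ t.erase j, x k = (#t - 1) * ∑ k ∈ t, x k := by
  rw [Finset.sum_congr rfl fun j hj ↦ Finset.sum_erase_eq_sub hj, Finset.sum_sub_distrib,
    Finset.sum_const, nsmul_eq_mul]
  ring

lemma Real.sum_log_sum_erase_div_le {ι : Type*} [DecidableEq ι] {t : Finset ι} {n : ℕ}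
    (ht : #t = n + 1) (hn : 1 ≤ n) {x : ι → ℝ} (hx : ∀ i ∈ t, 0 < x i) :
    (∑ j ∈ t, log ((∑ k ∈ t.erase j, x k) / n)) / (n + 1) ≤ log ((∑ k ∈ t, x k) / (n + 1)) := by
  have hpos : ∀ j ∈ t, (∑ k ∈ t.erase j, x k) / n ∈ Ioi (0 : ℝ) := fun j hj ↦ by
    have hne : (t.erase j).Nonempty := by
      rw [← Finset.card_pos, Finset.card_erase_of_mem hj]; omega
    exact div_pos (Finset.sum_pos (fun k hk ↦ hx k (mem_of_mem_erase hk)) hne) (by positivity)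
  have hw : ∑ _j ∈ t, ((n : ℝ) + 1)⁻¹ = 1 := by
    rw [sum_const, ht, nsmul_eq_mul]; push_cast; field_simp
  have hmean : ∑ j ∈ t, ((n : ℝ) + 1)⁻¹ • ((∑ k ∈ t.erase j, x k) / n)
      = (∑ k ∈ t, x k) / (n + 1) := by
    simp_rw [smul_eq_mul, ← mul_sum, ← sum_div, sum_sum_erase, ht]
    push_cast
    rw [add_sub_cancel_right]
    field_simp
  have := strictConcaveOn_log_Ioi.concaveOn.le_map_sum (fun _ _ ↦ by positivity) hw hpos
  rwa [hmean, ← smul_sum, smul_eq_mul, inv_mul_eq_div] at this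

theorem iwae_bound_monotone_general
    {Ω : Type*} [MeasurableSpace Ω] (P : Measure Ω) [IsProbabilityMeasure P]
    (w : ℕ → Ω → ℝ)
    (hmeas : ∀ i, Measurable (w i))
    (hindep : iIndepFun w P)
    (hident : ∀ i, Measure.map (w i) P = Measure.map (w 0) P)
    (hpos : ∀ i, ∀ᵐ ω ∂P, 0 < w i ω)
    (hlogint : ∀ K : ℕ, 1 ≤ K →
      Integrable (fun ω => Real.log ((∑ k ∈ Finset.range K, w k ω) / K)) P)
    (K : ℕ) (hK : 1 ≤ K) :
    ∫ ω, Real.log ((∑ k ∈ Finset.range K, w k ω) / K) ∂P ≤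
      ∫ ω, Real.log ((∑ k ∈ Finset.range (K + 1), w k ω) / (K + 1)) ∂P := by
  set L : Ω → ℝ := fun ω ↦ Real.log ((∑ k ∈ range K, w k ω) / K)
  set leaveOut : ℕ → Ω → ℝ := fun j ω ↦ Real.log ((∑ k ∈ (range (K + 1)).erase j, w k ω) / K)
  have hleaveOut : ∀ j ∈ range (K + 1), IdentDistrib (leaveOut j) L P P := fun j hj ↦
    (hindep.identDistrib_sum_of_card_eq
      (fun i j ↦ ⟨(hmeas i).aemeasurable, (hmeas j).aemeasurable, by rw [hident i, hident j]⟩)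
      (by simp [card_erase_of_mem hj])).comp (Real.measurable_log.comp (measurable_div_const _))
  have hleaveOut_int : ∀ j ∈ range (K + 1), Integrable (leaveOut j) P := fun j hj ↦
    (hleaveOut j hj).integrable_iff.mpr (hlogint K hK)
  have hjensen : ∀ᵐ ω ∂P, (∑ j ∈ range (K + 1), leaveOut j ω) / (K + 1)
      ≤ Real.log ((∑ k ∈ range (K + 1), w k ω) / (K + 1)) := by
    filter_upwards [ae_all_iff.mpr hpos] with ω hω
    exact Real.sum_log_sum_erase_div_le (card_range _) hK fun i _ ↦ hω i
  calc ∫ ω, L ω ∂P = ∫ ω, (∑ j ∈ range (K + 1), leaveOut j ω) / (K + 1) ∂P := by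
        rw [integral_div, integral_finsetSum _ hleaveOut_int,
          sum_congr rfl fun j hj ↦ (hleaveOut j hj).integral_eq, sum_const, card_range,
          nsmul_eq_mul, Nat.cast_add_one, mul_div_cancel_left₀ _ (by positivity)]
    _ ≤ _ := integral_mono_ae ((integrable_finsetSum _ hleaveOut_int).div_const _)
        (by simpa using hlogint (K + 1) (by omega)) hjensen

/-- For i.i.d. positive integrable random variables `w 0, w 1, ...`, the importance-weighted
bounds `L K = E[log((1/K) ∑_{k<K} w k)]` are monotonically non-decreasing in `K`:
`L (K+1) ≥ L K` for all `K ≥ 1`. -/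
theorem iwae_bound_monotone
    {Ω : Type*} [MeasurableSpace Ω] (P : Measure Ω) [IsProbabilityMeasure P]
    (w : ℕ → Ω → ℝ)
    (hmeas : ∀ i, Measurable (w i))
    (hindep : iIndepFun w P)
    (hident : ∀ i, Measure.map (w i) P = Measure.map (w 0) P)
    (hpos : ∀ i, ∀ᵐ ω ∂P, 0 < w i ω)
    (hint : ∀ i, Integrable (w i) P)
    (hlogint : ∀ K : ℕ, 1 ≤ K →
      Integrable (fun ω => Real.log ((∑ k ∈ Finset.range K, w k ω) / K)) P)
    (K : ℕ) (hK : 1 ≤ K) :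
    ∫ ω, Real.log ((∑ k ∈ Finset.range K, w k ω) / K) ∂P ≤
      ∫ ω, Real.log ((∑ k ∈ Finset.range (K + 1), w k ω) / (K + 1)) ∂P :=
  iwae_bound_monotone_general P w hmeas hindep hident hpos hlogint K hK
end

section
/- Suppose R = (R_1, ..., R_p) and X = (X_1, ..., X_p) are random vectors and Z̃ is a latent variable independent of X, such that the conditional distribution of R given (X, Z̃) factorizes as ∏_j p(r_j | x_{−j}, z̃) where r_j is conditionally independent of (x_j, r_{−j}) given (x_{−j}, z̃). Then the missingness mechanism satisfies p(r | x) = ∫ ∏_{j=1}^p p(r_j | x_{−j}, R_{−j} = 1, z̃) p(z̃) dz̃; in particular, p(r|x) depends on x only through coordinates x_{−j} for each factor, and is thus determined by quantities involving only values that are observed when the other indicators equal 1. -/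
open scoped BigOperators Classical

/-- Probability of an event under a density `p` on a finite outcome space. -/
noncomputable def discreteProb {Ω : Type*} [Fintype Ω] (p : Ω → ℝ) (E : Set Ω) : ℝ :=
  ∑ ω : Ω, if ω ∈ E then p ω else 0

lemma sum_fiber {Ω γ : Type*} [Fintype Ω] [Fintype γ] (p : Ω → ℝ) (f : Ω → γ) (F : Set Ω) :
    ∑ b : γ, discreteProb p {ω | ω ∈ F ∧ f ω = b} = discreteProb p F := by
  classical
  unfold discreteProb
  rw [Finset.sum_comm]
  refine Finset.sum_congr rfl fun ω _ => ?_
  by_cases h : ω ∈ F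
  · simp [h, Set.mem_setOf_eq]
  · simp [h, Set.mem_setOf_eq]

/-- Conditional no self-censoring given latent variables, discrete formulation.
Outcomes are triples `(x, r, z)` of data `x : ι → α`, missingness indicators
`r : ι → Bool`, and latent value `z : β`.  Assume (i) `Z̃ ⟂ X`, (ii) the conditional
distribution of `R` given `(X, Z̃)` factorizes as `∏_j p(r_j | x_{−j}, z̃)`, and (iii) for
each `j`, `R_j ⟂ (X_j, R_{−j}) | (X_{−j}, Z̃)`.  Then the missingness mechanism satisfies
`p(r | x) = ∑_z p(z) ∏_j p(r_j | X_{−j} = x_{−j}, R_{−j} = 1, Z̃ = z)`, so it is determined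
by quantities involving only values observed when the other indicators equal `1`. -/
theorem no_self_censoring_identification
    {ι α β : Type*} [Fintype ι] [DecidableEq ι] [Fintype α] [Fintype β]
    (p : (ι → α) × (ι → Bool) × β → ℝ)
    (hp : ∀ ω, 0 ≤ p ω) (hsum : ∑ ω, p ω = 1)
    -- `Z̃` is independent of `X`:
    (hindep : ∀ (x : ι → α) (z : β),
      discreteProb p {ω | ω.1 = x ∧ ω.2.2 = z} =
        discreteProb p {ω | ω.1 = x} * discreteProb p {ω | ω.2.2 = z})
    -- conditional no self-censoring: `R_j ⟂ (X_j, R_{−j}) | (X_{−j}, Z̃)`: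
    (hnsc : ∀ (j : ι) (a : Bool) (b : α) (c : ι → Bool) (d : ι → α) (z : β),
      discreteProb p {ω | ω.2.1 j = a ∧ ω.1 j = b ∧ (∀ i, i ≠ j → ω.2.1 i = c i) ∧
            (∀ i, i ≠ j → ω.1 i = d i) ∧ ω.2.2 = z} *
          discreteProb p {ω | (∀ i, i ≠ j → ω.1 i = d i) ∧ ω.2.2 = z} =
        discreteProb p {ω | ω.2.1 j = a ∧ (∀ i, i ≠ j → ω.1 i = d i) ∧ ω.2.2 = z} *
          discreteProb p {ω | ω.1 j = b ∧ (∀ i, i ≠ j → ω.2.1 i = c i) ∧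
            (∀ i, i ≠ j → ω.1 i = d i) ∧ ω.2.2 = z})
    (x : ι → α) (r : ι → Bool)
    -- the conditional distribution of `R` given `(X, Z̃)` factorizes as `∏_j p(r_j | x_{−j}, z̃)`:
    (hfact : ∀ (r' : ι → Bool) (z : β),
      discreteProb p {ω | ω.2.1 = r' ∧ ω.1 = x ∧ ω.2.2 = z} /
          discreteProb p {ω | ω.1 = x ∧ ω.2.2 = z} =
        ∏ j : ι,
          discreteProb p {ω | ω.2.1 j = r' j ∧ (∀ i, i ≠ j → ω.1 i = x i) ∧ ω.2.2 = z} /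
            discreteProb p {ω | (∀ i, i ≠ j → ω.1 i = x i) ∧ ω.2.2 = z})
    -- positivity of the conditioning events:
    (hxpos : 0 < discreteProb p {ω | ω.1 = x})
    (hxzpos : ∀ z : β, 0 < discreteProb p {ω | ω.1 = x ∧ ω.2.2 = z})
    (hmjpos : ∀ (j : ι) (z : β),
      0 < discreteProb p {ω | (∀ i, i ≠ j → ω.1 i = x i) ∧ ω.2.2 = z})
    (hcondpos : ∀ (j : ι) (z : β),
      0 < discreteProb p {ω | (∀ i, i ≠ j → ω.1 i = x i) ∧
            (∀ i, i ≠ j → ω.2.1 i = true) ∧ ω.2.2 = z}) :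
    discreteProb p {ω | ω.2.1 = r ∧ ω.1 = x} / discreteProb p {ω | ω.1 = x} =
      ∑ z : β, discreteProb p {ω | ω.2.2 = z} *
        ∏ j : ι,
          discreteProb p {ω | ω.2.1 j = r j ∧ (∀ i, i ≠ j → ω.1 i = x i) ∧
              (∀ i, i ≠ j → ω.2.1 i = true) ∧ ω.2.2 = z} /
            discreteProb p {ω | (∀ i, i ≠ j → ω.1 i = x i) ∧
              (∀ i, i ≠ j → ω.2.1 i = true) ∧ ω.2.2 = z} := by
  classical
  have hx0 : discreteProb p {ω | ω.1 = x} ≠ 0 := ne_of_gt hxpos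
  -- per j, z : old ratio = new ratio
  have hratio : ∀ (j : ι) (z : β),
      discreteProb p {ω | ω.2.1 j = r j ∧ (∀ i, i ≠ j → ω.1 i = x i) ∧ ω.2.2 = z} /
        discreteProb p {ω | (∀ i, i ≠ j → ω.1 i = x i) ∧ ω.2.2 = z} =
      discreteProb p {ω | ω.2.1 j = r j ∧ (∀ i, i ≠ j → ω.1 i = x i) ∧
          (∀ i, i ≠ j → ω.2.1 i = true) ∧ ω.2.2 = z} /
        discreteProb p {ω | (∀ i, i ≠ j → ω.1 i = x i) ∧
          (∀ i, i ≠ j → ω.2.1 i = true) ∧ ω.2.2 = z} := by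
    intro j z
    have hsum2 : ∑ b : α,
        (discreteProb p {ω | ω.2.1 j = r j ∧ ω.1 j = b ∧ (∀ i, i ≠ j → ω.2.1 i = true) ∧
            (∀ i, i ≠ j → ω.1 i = x i) ∧ ω.2.2 = z} *
          discreteProb p {ω | (∀ i, i ≠ j → ω.1 i = x i) ∧ ω.2.2 = z}) =
        ∑ b : α,
        (discreteProb p {ω | ω.2.1 j = r j ∧ (∀ i, i ≠ j → ω.1 i = x i) ∧ ω.2.2 = z} *
          discreteProb p {ω | ω.1 j = b ∧ (∀ i, i ≠ j → ω.2.1 i = true) ∧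
            (∀ i, i ≠ j → ω.1 i = x i) ∧ ω.2.2 = z}) :=
      Finset.sum_congr rfl fun b _ => hnsc j (r j) b (fun _ => true) x z
    rw [← Finset.sum_mul, ← Finset.mul_sum] at hsum2
    have hA : (∑ b : α, discreteProb p {ω | ω.2.1 j = r j ∧ ω.1 j = b ∧
          (∀ i, i ≠ j → ω.2.1 i = true) ∧ (∀ i, i ≠ j → ω.1 i = x i) ∧ ω.2.2 = z}) =
        discreteProb p {ω | ω.2.1 j = r j ∧ (∀ i, i ≠ j → ω.1 i = x i) ∧
          (∀ i, i ≠ j → ω.2.1 i = true) ∧ ω.2.2 = z} := by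
      rw [← sum_fiber p (fun ω => ω.1 j) {ω | ω.2.1 j = r j ∧ (∀ i, i ≠ j → ω.1 i = x i) ∧
          (∀ i, i ≠ j → ω.2.1 i = true) ∧ ω.2.2 = z}]
      refine Finset.sum_congr rfl fun b _ => ?_
      congr 1
      ext ω
      simp only [Set.mem_setOf_eq]
      tauto
    have hC : (∑ b : α, discreteProb p {ω | ω.1 j = b ∧ (∀ i, i ≠ j → ω.2.1 i = true) ∧
          (∀ i, i ≠ j → ω.1 i = x i) ∧ ω.2.2 = z}) =
        discreteProb p {ω | (∀ i, i ≠ j → ω.1 i = x i) ∧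
          (∀ i, i ≠ j → ω.2.1 i = true) ∧ ω.2.2 = z} := by
      rw [← sum_fiber p (fun ω => ω.1 j) {ω | (∀ i, i ≠ j → ω.1 i = x i) ∧
          (∀ i, i ≠ j → ω.2.1 i = true) ∧ ω.2.2 = z}]
      refine Finset.sum_congr rfl fun b _ => ?_
      congr 1
      ext ω
      simp only [Set.mem_setOf_eq]
      tauto
    rw [hA, hC] at hsum2
    have hM0 : discreteProb p {ω | (∀ i, i ≠ j → ω.1 i = x i) ∧ ω.2.2 = z} ≠ 0 :=
      ne_of_gt (hmjpos j z)
    have hC0 : discreteProb p {ω | (∀ i, i ≠ j → ω.1 i = x i) ∧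
        (∀ i, i ≠ j → ω.2.1 i = true) ∧ ω.2.2 = z} ≠ 0 := ne_of_gt (hcondpos j z)
    field_simp
    linarith [hsum2]
  -- decompose numerator over z
  have h1 : discreteProb p {ω | ω.2.1 = r ∧ ω.1 = x} =
      ∑ z : β, discreteProb p {ω | ω.2.1 = r ∧ ω.1 = x ∧ ω.2.2 = z} := by
    rw [← sum_fiber p (fun ω => ω.2.2) {ω | ω.2.1 = r ∧ ω.1 = x}]
    refine Finset.sum_congr rfl fun z _ => ?_
    congr 1
    ext ω
    simp only [Set.mem_setOf_eq]
    tauto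
  rw [h1, Finset.sum_div]
  refine Finset.sum_congr rfl fun z _ => ?_
  have hxz0 : discreteProb p {ω | ω.1 = x ∧ ω.2.2 = z} ≠ 0 := ne_of_gt (hxzpos z)
  have h2 : discreteProb p {ω | ω.2.1 = r ∧ ω.1 = x ∧ ω.2.2 = z} =
      (∏ j : ι,
          discreteProb p {ω | ω.2.1 j = r j ∧ (∀ i, i ≠ j → ω.1 i = x i) ∧ ω.2.2 = z} /
            discreteProb p {ω | (∀ i, i ≠ j → ω.1 i = x i) ∧ ω.2.2 = z}) *
        discreteProb p {ω | ω.1 = x ∧ ω.2.2 = z} :=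
    (div_eq_iff hxz0).mp (hfact r z)
  rw [h2, hindep x z]
  have hprod : (∏ j : ι,
      discreteProb p {ω | ω.2.1 j = r j ∧ (∀ i, i ≠ j → ω.1 i = x i) ∧ ω.2.2 = z} /
        discreteProb p {ω | (∀ i, i ≠ j → ω.1 i = x i) ∧ ω.2.2 = z}) =
      ∏ j : ι,
      discreteProb p {ω | ω.2.1 j = r j ∧ (∀ i, i ≠ j → ω.1 i = x i) ∧
          (∀ i, i ≠ j → ω.2.1 i = true) ∧ ω.2.2 = z} /
        discreteProb p {ω | (∀ i, i ≠ j → ω.1 i = x i) ∧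
          (∀ i, i ≠ j → ω.2.1 i = true) ∧ ω.2.2 = z} :=
    Finset.prod_congr rfl fun j _ => hratio j z
  rw [hprod]
  rw [mul_comm (discreteProb p {ω | ω.1 = x}) (discreteProb p {ω | ω.2.2 = z}),
      ← mul_assoc, mul_div_assoc, div_self hx0, mul_one]
  ring
end

section
/- For K ≥ m ≥ 1 and i.i.d. positive integrable random variables w_1, ..., w_K, one has E[log((1/K)∑_{k=1}^K w_k)] ≥ E[log((1/m)∑_{j=1}^m w_j)]. -/
/-!
Averaging over the `C(K, m)` subsets `I ⊆ {0, …, K-1}` of size `m`, each index lies in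
`C(K-1, m-1)` of them, so the mean of the subset averages `(1/m) ∑_{i ∈ I} w_i` is the full
average `(1/K) ∑_{k<K} w_k`. Jensen's inequality for the concave `log` then bounds the mean of
`log((1/m) ∑_{i ∈ I} w_i)` over the subsets by `log((1/K) ∑_{k<K} w_k)`, pointwise. For i.i.d.
`w_i` the law of `∑_{i ∈ I} w_i` depends only on `#I`, so each of these `log`-averages has the
expectation of `log((1/m) ∑_{j<m} w_j)`; taking expectations gives the claim.
-/

open MeasureTheory ProbabilityTheory Finset

theorem Finset.sum_powersetCard_sum {ι M : Type*} [AddCommMonoid M] (s : Finset ι) {m : ℕ}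
    (hm : 1 ≤ m) (f : ι → M) :
    ∑ I ∈ s.powersetCard m, ∑ i ∈ I, f i = (#s - 1).choose (m - 1) • ∑ i ∈ s, f i := by
  classical
  rw [sum_comm' (t' := s) (s' := fun i => (s.powersetCard m).filter ({i} ⊆ ·))]
  · rw [smul_sum]
    refine sum_congr rfl fun i hi => ?_
    rw [sum_const, card_filter_powersetCard_subset _ _ _ (singleton_subset_iff.2 hi)
      (by simpa using hm), card_singleton]
  · intro I i
    simp only [mem_filter, mem_powersetCard, singleton_subset_iff]
    exact ⟨fun ⟨⟨hIs, hIm⟩, hiI⟩ => ⟨⟨⟨hIs, hIm⟩, hiI⟩, hIs hiI⟩,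
      fun ⟨⟨⟨hIs, hIm⟩, hiI⟩, _⟩ => ⟨⟨hIs, hIm⟩, hiI⟩⟩

theorem ConcaveOn.choose_inv_mul_sum_powersetCard_le {ι E : Type*} [AddCommGroup E]
    [Module ℝ E] {D : Set E} {f : E → ℝ} (hf : ConcaveOn ℝ D f) {s : Finset ι} {x : ι → E}
    (hx : ∀ i ∈ s, x i ∈ D) {m : ℕ} (hm : 1 ≤ m) (hms : m ≤ #s) :
    ((#s).choose m : ℝ)⁻¹ * ∑ I ∈ s.powersetCard m, f ((m : ℝ)⁻¹ • ∑ i ∈ I, x i)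
      ≤ f ((#s : ℝ)⁻¹ • ∑ i ∈ s, x i) := by
  have hchoose : (0 : ℝ) < (#s).choose m := by exact_mod_cast Nat.choose_pos hms
  have hweights : ∑ _I ∈ s.powersetCard m, ((#s).choose m : ℝ)⁻¹ = 1 := by
    rw [sum_const, card_powersetCard, nsmul_eq_mul, mul_inv_cancel₀ hchoose.ne']
  have hmean_mem : ∀ I ∈ s.powersetCard m, (m : ℝ)⁻¹ • ∑ i ∈ I, x i ∈ D := by
    intro I hI
    obtain ⟨hIs, hIm⟩ := mem_powersetCard.1 hI
    rw [smul_sum]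
    refine hf.1.sum_mem (fun _ _ => by positivity) ?_ fun i hi => hx i (hIs hi)
    rw [sum_const, hIm, nsmul_eq_mul, mul_inv_cancel₀ (by positivity)]
  have hcount : ((#s - 1).choose (m - 1) : ℝ) * (#s : ℝ) = (#s).choose m * m := by
    have := Nat.add_one_mul_choose_eq (#s - 1) (m - 1)
    rw [Nat.sub_add_cancel (hm.trans hms), Nat.sub_add_cancel hm] at this
    exact_mod_cast by linarith
  have hmean : ∑ I ∈ s.powersetCard m, ((#s).choose m : ℝ)⁻¹ • (m : ℝ)⁻¹ • ∑ i ∈ I, x i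
      = (#s : ℝ)⁻¹ • ∑ i ∈ s, x i := by
    rw [← smul_sum, ← smul_sum, sum_powersetCard_sum s hm, ← Nat.cast_smul_eq_nsmul ℝ,
      smul_smul, smul_smul]
    have hs : (0 : ℝ) < #s := by exact_mod_cast hm.trans hms
    congr 1
    field_simp
    linarith
  simpa only [smul_eq_mul, ← mul_sum, hmean] using
    hf.le_map_sum (fun _ _ => by positivity) hweights hmean_mem

namespace ProbabilityTheory.iIndepFun

variable {ι Ω M : Type*} [MeasurableSpace Ω] {P : Measure Ω} [IsFiniteMeasure P]
  [AddCommMonoid M] [MeasurableSpace M] [MeasurableAdd₂ M] {w : ι → Ω → M} {μ : Measure M}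

theorem map_finsetSum_insert [DecidableEq ι] (hindep : iIndepFun w P)
    (hmeas : ∀ i, Measurable (w i)) (hident : ∀ i, P.map (w i) = μ) {s : Finset ι} {a : ι}
    (ha : a ∉ s) :
    P.map (∑ i ∈ insert a s, w i) = P.map (∑ i ∈ s, w i) ∗ μ := by
  have hsum_meas : Measurable (∑ i ∈ s, w i) := by
    rw [sum_fn]
    exact Finset.measurable_sum s fun i _ => hmeas i
  rw [sum_insert ha, add_comm,
    (hindep.indepFun_finsetSum_of_notMem hmeas ha).map_add_eq_map_conv_map hsum_meas (hmeas a),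
    hident]

theorem map_finsetSum_eq_of_card_eq (hindep : iIndepFun w P)
    (hmeas : ∀ i, Measurable (w i)) (hident : ∀ i, P.map (w i) = μ) {s t : Finset ι}
    (hst : #s = #t) :
    P.map (∑ i ∈ s, w i) = P.map (∑ i ∈ t, w i) := by
  classical
  induction s using Finset.induction_on generalizing t with
  | empty => rw [card_eq_zero.1 hst.symm]
  | insert a s ha ih =>
    obtain ⟨b, hb⟩ : t.Nonempty := by
      rw [← card_pos, ← hst]
      exact card_pos.2 ⟨a, mem_insert_self a s⟩
    rw [← insert_erase hb, map_finsetSum_insert hindep hmeas hident ha,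
      map_finsetSum_insert hindep hmeas hident (notMem_erase b t),
      ih (by rw [card_erase_of_mem hb, ← hst, card_insert_of_notMem ha, Nat.add_sub_cancel])]

theorem identDistrib_finsetSum_of_card_eq (hindep : iIndepFun w P)
    (hmeas : ∀ i, Measurable (w i)) (hident : ∀ i, P.map (w i) = μ) {s t : Finset ι}
    (hst : #s = #t) :
    IdentDistrib (fun ω => ∑ i ∈ s, w i ω) (fun ω => ∑ i ∈ t, w i ω) P P where
  aemeasurable_fst := (Finset.measurable_sum s fun i _ => hmeas i).aemeasurable
  aemeasurable_snd := (Finset.measurable_sum t fun i _ => hmeas i).aemeasurable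
  map_eq := by simpa only [sum_fn] using map_finsetSum_eq_of_card_eq hindep hmeas hident hst

end ProbabilityTheory.iIndepFun

theorem iwae_bound_mono_of_le_general
    {Ω : Type*} [MeasurableSpace Ω] (P : Measure Ω) [IsProbabilityMeasure P]
    (w : ℕ → Ω → ℝ)
    (hmeas : ∀ i, Measurable (w i))
    (hindep : iIndepFun w P)
    (hident : ∀ i, Measure.map (w i) P = Measure.map (w 0) P)
    (hpos : ∀ i, ∀ᵐ ω ∂P, 0 < w i ω)
    (hlogint : ∀ K : ℕ, 1 ≤ K →
      Integrable (fun ω => Real.log ((∑ k ∈ Finset.range K, w k ω) / K)) P)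
    (m K : ℕ) (hm : 1 ≤ m) (hmK : m ≤ K) :
    ∫ ω, Real.log ((∑ j ∈ Finset.range m, w j ω) / m) ∂P ≤
      ∫ ω, Real.log ((∑ k ∈ Finset.range K, w k ω) / K) ∂P := by
  have hlaw : ∀ I ∈ (range K).powersetCard m,
      IdentDistrib (fun ω => Real.log ((∑ i ∈ I, w i ω) / m))
        (fun ω => Real.log ((∑ j ∈ range m, w j ω) / m)) P P := fun I hI =>
    (hindep.identDistrib_finsetSum_of_card_eq hmeas hident
      (by rw [(mem_powersetCard.1 hI).2, card_range])).comp
      (Real.measurable_log.comp (measurable_id.div_const _))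
  have hint : ∀ I ∈ (range K).powersetCard m,
      Integrable (fun ω => Real.log ((∑ i ∈ I, w i ω) / m)) P := fun I hI =>
    (hlaw I hI).integrable_iff.2 (hlogint m hm)
  have hjensen : ∀ᵐ ω ∂P, (K.choose m : ℝ)⁻¹ *
      ∑ I ∈ (range K).powersetCard m, Real.log ((∑ i ∈ I, w i ω) / m)
        ≤ Real.log ((∑ k ∈ range K, w k ω) / K) := by
    filter_upwards [ae_all_iff.2 hpos] with ω hω
    simpa only [card_range, smul_eq_mul, inv_mul_eq_div] using
      strictConcaveOn_log_Ioi.concaveOn.choose_inv_mul_sum_powersetCard_le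
        (s := range K) (x := fun i => w i ω) (fun i _ => hω i) hm (by rwa [card_range])
  have hchoose : (K.choose m : ℝ) ≠ 0 := by exact_mod_cast (Nat.choose_pos hmK).ne'
  calc ∫ ω, Real.log ((∑ j ∈ range m, w j ω) / m) ∂P
      = ∫ ω, (K.choose m : ℝ)⁻¹ *
          ∑ I ∈ (range K).powersetCard m, Real.log ((∑ i ∈ I, w i ω) / m) ∂P := by
        rw [integral_const_mul, integral_finsetSum _ hint,
          sum_congr rfl fun I hI => (hlaw I hI).integral_eq, sum_const, card_powersetCard,
          card_range, nsmul_eq_mul, inv_mul_cancel_left₀ hchoose]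
    _ ≤ _ := integral_mono_ae ((integrable_finsetSum _ hint).const_mul _)
        (hlogint K (hm.trans hmK)) hjensen

/-- For `K ≥ m ≥ 1` and i.i.d. positive integrable random variables `w 0, ..., w (K-1)`,
one has `E[log((1/K) ∑_{k<K} w k)] ≥ E[log((1/m) ∑_{j<m} w j)]`. -/
theorem iwae_bound_mono_of_le
    {Ω : Type*} [MeasurableSpace Ω] (P : Measure Ω) [IsProbabilityMeasure P]
    (w : ℕ → Ω → ℝ)
    (hmeas : ∀ i, Measurable (w i))
    (hindep : iIndepFun w P)
    (hident : ∀ i, Measure.map (w i) P = Measure.map (w 0) P)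
    (hpos : ∀ i, ∀ᵐ ω ∂P, 0 < w i ω)
    (hint : ∀ i, Integrable (w i) P)
    (hlogint : ∀ K : ℕ, 1 ≤ K →
      Integrable (fun ω => Real.log ((∑ k ∈ Finset.range K, w k ω) / K)) P)
    (m K : ℕ) (hm : 1 ≤ m) (hmK : m ≤ K) :
    ∫ ω, Real.log ((∑ j ∈ Finset.range m, w j ω) / m) ∂P ≤
      ∫ ω, Real.log ((∑ k ∈ Finset.range K, w k ω) / K) ∂P :=
  iwae_bound_mono_of_le_general P w hmeas hindep hident hpos hlogint m K hm hmK
end
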